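/- arXiv:0710.0409 — 5 statements merged into one kernel-verified Lean document; each statement's English description precedes it below -/
import Mathlib

section
/- Let r ≥ 4 and n ≥ r+1 with n - r even. The graph G = K_{r-3} + ((n-r)/2 · K_2 ∪ P_2) on n vertices does not contain K_{r+1} minus the edge set of U as a subgraph, where U is any graph on k vertices (7 ≤ k ≤ r+1) that contains no 4-cycle and no copy of Z_4 = K_4 - P_2. -/
open SimpleGraph Finset

noncomputable def deg {n : ℕ} (G : SimpleGraph (Fin n)) (v : Fin n) : ℕ :=
  Set.ncard {w | G.Adj v w}

def Contains {α β : Type*} (G : SimpleGraph α) (H : SimpleGraph β) : Prop :=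
  ∃ f : β ↪ α, ∀ ⦃u v : β⦄, H.Adj u v → G.Adj (f u) (f v)

def IsGraphic {n : ℕ} (d : Fin n → ℕ) : Prop :=
  ∃ G : SimpleGraph (Fin n), ∀ i, deg G i = d i

def PotentiallyGraphic {n : ℕ} {β : Type*} (H : SimpleGraph β) (d : Fin n → ℕ) : Prop :=
  ∃ G : SimpleGraph (Fin n), (∀ i, deg G i = d i) ∧ Contains G H

noncomputable def sigmaPot {β : Type*} (H : SimpleGraph β) (n : ℕ) : ℕ :=
  sInf {l : ℕ | Even l ∧ ∀ d : Fin n → ℕ, Antitone d → IsGraphic d →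
    l ≤ ∑ i, d i → PotentiallyGraphic H d}

def C4graph : SimpleGraph (Fin 4) :=
  SimpleGraph.fromEdgeSet {s(0,1), s(1,2), s(2,3), s(0,3)}

def Z4graph : SimpleGraph (Fin 4) :=
  SimpleGraph.fromEdgeSet {s(0,2), s(0,3), s(1,3), s(2,3)}

def K3UP3 : SimpleGraph (Fin 7) :=
  SimpleGraph.fromEdgeSet {s(0,1), s(0,2), s(1,2), s(3,4), s(4,5), s(5,6)}

/-- The graph `K_{r-3} + (m·K_2 ∪ P_2)` on `n = r + 2m` vertices. -/
def laiGraph (r m : ℕ) : SimpleGraph (Fin (r + 2 * m)) :=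
  SimpleGraph.fromRel (fun i j =>
    i.val < r - 3 ∨ j.val < r - 3 ∨
    (r - 3 ≤ i.val ∧ r - 3 ≤ j.val ∧ i.val < r + 2 * m - 3 ∧ j.val < r + 2 * m - 3 ∧
      (i.val - (r - 3)) / 2 = (j.val - (r - 3)) / 2) ∨
    (r + 2 * m - 3 ≤ i.val ∧ r + 2 * m - 3 ≤ j.val ∧
      (i.val = r + 2 * m - 2 ∨ j.val = r + 2 * m - 2)))

/-! At most `r - 3` vertices of a copy of `K_{r+1} - U` in `K_{r-3} + (m·K_2 ∪ P_2)` lie in the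
universal part `K_{r-3}`, so four of them lie in `m·K_2 ∪ P_2`. The host graph induces on these
four vertices a subgraph of `2K_2` or of `P_2 ∪ K_1`, so its complement there contains `C_4` or
`Z_4`; every such non-edge of the host graph is an edge of `U`, contradicting the hypotheses. -/

namespace Contains

variable {α β γ : Type*} {G G' : SimpleGraph α} {H : SimpleGraph β}

theorem mono (hGG' : G ≤ G') (h : Contains G H) : Contains G' H :=
  let ⟨e, he⟩ := h
  ⟨e, fun _ _ huv => hGG' (he huv)⟩

theorem of_map {U : SimpleGraph γ} (f : γ ↪ α) (hH : ∀ x, ∃ y, H.Adj x y)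
    (h : Contains (U.map f) H) : Contains U H := by
  obtain ⟨e, he⟩ := h
  have hrange (x : β) : e x ∈ Set.range f := by
    obtain ⟨y, hxy⟩ := hH x
    obtain ⟨a, -, -, ha, -⟩ := (map_adj f U _ _).1 (he hxy)
    exact ⟨a, ha⟩
  choose p hp using hrange
  refine ⟨⟨p, fun x y hxy => e.injective (by rw [← hp x, ← hp y, hxy])⟩, fun x y hxy => ?_⟩
  obtain ⟨a, b, hab, ha, hb⟩ := (map_adj f U _ _).1 (he hxy)
  change U.Adj (p x) (p y)
  rwa [← f.injective (ha.trans (hp x).symm), ← f.injective (hb.trans (hp y).symm)]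

end Contains

theorem C4graph_exists_adj (x : Fin 4) : ∃ y, C4graph.Adj x y := by
  fin_cases x
  exacts [⟨1, by simp [C4graph]⟩, ⟨0, by simp [C4graph]⟩, ⟨1, by simp [C4graph]⟩,
    ⟨0, by simp [C4graph]⟩]

theorem Z4graph_exists_adj (x : Fin 4) : ∃ y, Z4graph.Adj x y := by
  fin_cases x
  exacts [⟨2, by simp [Z4graph]⟩, ⟨3, by simp [Z4graph]⟩, ⟨0, by simp [Z4graph]⟩,
    ⟨0, by simp [Z4graph]⟩]

section

variable {α : Type*} {G : SimpleGraph α}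

theorem contains_C4graph {a b c d : α} (hab : a ≠ b) (hcd : c ≠ d) (hac : G.Adj a c)
    (had : G.Adj a d) (hbc : G.Adj b c) (hbd : G.Adj b d) : Contains G C4graph := by
  have := hac.ne; have := had.ne; have := hbc.ne; have := hbd.ne
  refine ⟨⟨![a, c, b, d], fun i j hij => ?_⟩, fun i j hij => ?_⟩
  · fin_cases i <;> fin_cases j <;> simp_all
  · change G.Adj (![a, c, b, d] i) (![a, c, b, d] j)
    fin_cases i <;> fin_cases j <;> simp_all [C4graph, G.adj_comm]

theorem contains_Z4graph {x y z w : α} (hxy : x ≠ y) (hyz : y ≠ z) (hxz : G.Adj x z)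
    (hxw : G.Adj x w) (hyw : G.Adj y w) (hzw : G.Adj z w) : Contains G Z4graph := by
  have := hxz.ne; have := hxw.ne; have := hyw.ne; have := hzw.ne
  refine ⟨⟨![x, y, z, w], fun i j hij => ?_⟩, fun i j hij => ?_⟩
  · fin_cases i <;> fin_cases j <;> simp_all
  · change G.Adj (![x, y, z, w] i) (![x, y, z, w] j)
    fin_cases i <;> fin_cases j <;> simp_all [Z4graph, G.adj_comm]

theorem compl_contains_C4graph {a b c d : α} (hab : a ≠ b) (hcd : c ≠ d)
    (hac : a ≠ c) (had : a ≠ d) (hbc : b ≠ c) (hbd : b ≠ d) (hac' : ¬ G.Adj a c)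
    (had' : ¬ G.Adj a d) (hbc' : ¬ G.Adj b c) (hbd' : ¬ G.Adj b d) : Contains Gᶜ C4graph :=
  contains_C4graph hab hcd ((compl_adj ..).2 ⟨hac, hac'⟩) ((compl_adj ..).2 ⟨had, had'⟩)
    ((compl_adj ..).2 ⟨hbc, hbc'⟩) ((compl_adj ..).2 ⟨hbd, hbd'⟩)

end

/-- `G[L]` is a disjoint union of copies of `K_1`, `K_2` and `P_2`. -/
def SmallPathComponents {V : Type*} (G : SimpleGraph V) (L : Set V) : Prop :=
  ∀ ⦃x y z w⦄, x ∈ L → y ∈ L → z ∈ L → w ∈ L → G.Adj x y → G.Adj y z → x ≠ z →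
    (G.Adj x w → w = y) ∧ (G.Adj y w → w = x ∨ w = z)

namespace SmallPathComponents

variable {V W : Type*} {G : SimpleGraph V} {L : Set V}

theorem comap (g : W ↪ V) (hG : SmallPathComponents G L) :
    SmallPathComponents (G.comap g) (g ⁻¹' L) := by
  intro x y z w hx hy hz hw hxy hyz hxz
  have := hG hx hy hz hw hxy hyz (g.injective.ne hxz)
  simp only [comap_adj, g.injective.eq_iff] at this ⊢
  exact this

theorem compl_contains_Z4graph (hG : SmallPathComponents G L) {x y z w : V}
    (hx : x ∈ L) (hy : y ∈ L) (hz : z ∈ L) (hw : w ∈ L)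
    (hxy : G.Adj x y) (hyz : G.Adj y z) (hxz : x ≠ z)
    (hwx : w ≠ x) (hwy : w ≠ y) (hwz : w ≠ z) : Contains Gᶜ Z4graph := by
  obtain ⟨hxw, hyw⟩ := hG hx hy hz hw hxy hyz hxz
  have hzw := (hG hz hy hx hw hyz.symm hxy.symm hxz.symm).1
  have hxz' := (hG hx hy hz hz hxy hyz hxz).1
  refine contains_Z4graph (w := w) hxy.ne hyz.ne ?_ ?_ ?_ ?_ <;> rw [compl_adj]
  · exact ⟨hxz, fun h => hyz.ne (hxz' h).symm⟩
  · exact ⟨hwx.symm, fun h => hwy (hxw h)⟩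
  · exact ⟨hwy.symm, fun h => (hyw h).elim hwx hwz⟩
  · exact ⟨hwz.symm, fun h => hwy (hzw h)⟩

theorem compl_contains_C4graph_or_Z4graph_of_adj (hG : SmallPathComponents G L) {a b c d : V}
    (ha : a ∈ L) (hb : b ∈ L) (hc : c ∈ L) (hd : d ∈ L)
    (hac : a ≠ c) (had : a ≠ d) (hbc : b ≠ c) (hbd : b ≠ d) (hcd : c ≠ d) (hab : G.Adj a b) :
    Contains Gᶜ C4graph ∨ Contains Gᶜ Z4graph := by
  -- A second edge at `a` or `b` closes a path on three vertices, isolating the fourth (`Z_4`);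
  -- otherwise no edge crosses `{a, b} | {c, d}` (`C_4`).
  by_cases hac' : G.Adj a c
  · exact .inr (hG.compl_contains_Z4graph hc ha hb hd hac'.symm hab hbc.symm hcd.symm
      had.symm hbd.symm)
  by_cases had' : G.Adj a d
  · exact .inr (hG.compl_contains_Z4graph hd ha hb hc had'.symm hab hbd.symm hcd
      hac.symm hbc.symm)
  by_cases hbc' : G.Adj b c
  · exact .inr (hG.compl_contains_Z4graph ha hb hc hd hab hbc' hac had.symm hbd.symm
      hcd.symm)
  by_cases hbd' : G.Adj b d
  · exact .inr (hG.compl_contains_Z4graph ha hb hd hc hab hbd' had hac.symm hbc.symm hcd)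
  exact .inl (compl_contains_C4graph hab.ne hcd hac had hbc hbd hac' had' hbc' hbd')

theorem compl_contains_C4graph_or_Z4graph (hG : SmallPathComponents G L) {a b c d : V}
    (ha : a ∈ L) (hb : b ∈ L) (hc : c ∈ L) (hd : d ∈ L)
    (hab : a ≠ b) (hac : a ≠ c) (had : a ≠ d) (hbc : b ≠ c) (hbd : b ≠ d) (hcd : c ≠ d) :
    Contains Gᶜ C4graph ∨ Contains Gᶜ Z4graph := by
  by_cases hab' : G.Adj a b
  · exact hG.compl_contains_C4graph_or_Z4graph_of_adj ha hb hc hd hac had hbc hbd hcd hab'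
  by_cases hac' : G.Adj a c
  · exact hG.compl_contains_C4graph_or_Z4graph_of_adj ha hc hb hd hab had hbc.symm hcd hbd hac'
  by_cases had' : G.Adj a d
  · exact hG.compl_contains_C4graph_or_Z4graph_of_adj ha hd hb hc hab hac hbd.symm hcd.symm hbc had'
  by_cases hbc' : G.Adj b c
  · exact hG.compl_contains_C4graph_or_Z4graph_of_adj hb hc ha hd hab.symm hbd hac.symm hcd had hbc'
  by_cases hbd' : G.Adj b d
  · exact hG.compl_contains_C4graph_or_Z4graph_of_adj hb hd ha hc
      hab.symm hbc had.symm hcd.symm hac hbd'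
  by_cases hcd' : G.Adj c d
  · exact hG.compl_contains_C4graph_or_Z4graph_of_adj hc hd ha hb
      hac.symm hbc.symm had.symm hbd.symm hab hcd'
  exact .inl (compl_contains_C4graph hab hcd hac had hbc hbd hac' had' hbc' hbd')

end SmallPathComponents

theorem laiGraph_smallPathComponents (r m : ℕ) :
    SmallPathComponents (laiGraph r m) {x | r - 3 ≤ x.val} := by
  intro x y z w hx hy hz hw hxy hyz hxz
  simp only [Set.mem_ofPred_eq] at hx hy hz hw
  simp only [laiGraph, fromRel_adj, ne_eq, Fin.ext_iff] at *
  omega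

theorem card_sub_le_card_filter_le {α : Type*} [Fintype α] {g : α → ℕ} (hg : g.Injective)
    (t : ℕ) : Fintype.card α - t ≤ #{u | t ≤ g u} := by
  classical
  have hlow : #{u | ¬ t ≤ g u} ≤ t := by
    simpa using card_le_card_of_injOn g (t := range t) (fun u hu => by simpa using hu) hg.injOn
  have := card_filter_add_card_filter_not (s := univ) (fun u => t ≤ g u)
  rw [card_univ] at this
  omega

theorem stmt_2_general (r k m : ℕ) (hr : 4 ≤ r) (U : SimpleGraph (Fin k))
    (hC4 : ¬ Contains U C4graph) (hZ4 : ¬ Contains U Z4graph)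
    (f : Fin k ↪ Fin (r + 1)) :
    ¬ Contains (laiGraph r m) ((⊤ : SimpleGraph (Fin (r + 1))) \ U.map f) := by
  classical
  rintro ⟨g, hg⟩
  set H := (laiGraph r m).comap g
  have hHU : Hᶜ ≤ U.map f :=
    compl_le_iff_compl_le.1 (by rw [← top_sdiff]; exact fun u v h => hg h)
  have hH : SmallPathComponents H {u | r - 3 ≤ (g u).val} :=
    (laiGraph_smallPathComponents r m).comap g
  have hcard : 4 ≤ #{u | r - 3 ≤ (g u).val} := by
    have := card_sub_le_card_filter_le (g := fun u => (g u).val)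
      (Fin.val_injective.comp g.injective) (r - 3)
    rw [Fintype.card_fin] at this
    omega
  obtain ⟨S, hS, hS4⟩ := exists_subset_card_eq hcard
  obtain ⟨a, b, c, d, hab, hac, had, hbc, hbd, hcd, rfl⟩ := card_eq_four.1 hS4
  simp only [insert_subset_iff, singleton_subset_iff, mem_filter, mem_univ, true_and] at hS
  obtain ⟨ha, hb, hc, hd⟩ := hS
  rcases hH.compl_contains_C4graph_or_Z4graph ha hb hc hd hab hac had hbc hbd hcd with h | h
  · exact hC4 ((h.mono hHU).of_map f C4graph_exists_adj)
  · exact hZ4 ((h.mono hHU).of_map f Z4graph_exists_adj)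

/-- For `r ≥ 4`, `n ≥ r+1` with `n - r` even (`n = r + 2m`), the graph
`K_{r-3} + ((n-r)/2 · K_2 ∪ P_2)` does not contain `K_{r+1} - U` as a subgraph,
for any graph `U` on `k` vertices (`7 ≤ k ≤ r+1`) with no `C_4` and no `Z_4`. -/
theorem stmt_2 (r n k m : ℕ) (hr : 4 ≤ r) (hn : r + 1 ≤ n) (hnm : n = r + 2 * m)
    (hk7 : 7 ≤ k) (hkr : k ≤ r + 1) (U : SimpleGraph (Fin k))
    (hC4 : ¬ Contains U C4graph) (hZ4 : ¬ Contains U Z4graph)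
    (f : Fin k ↪ Fin (r + 1)) :
    ¬ Contains (laiGraph r m) ((⊤ : SimpleGraph (Fin (r + 1))) \ U.map f) :=
  stmt_2_general r k m hr U hC4 hZ4 f
end

section
/- If r ≥ 4, n ≥ r+1, and n - r is odd, then σ(K_{r+1} - U, n) ≥ (r-1)(2n-r) - 3(n-r) - 1, where U is a graph on k vertices (7 ≤ k ≤ r+1) containing no 4-cycle and no Z_4 = K_4 - P_2. The witness is the graphic sequence of K_{r-3} + ((n-r-1)/2 · K_2 ∪ P_2 ∪ K_1). -/
open SimpleGraph Finset

/-!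
Put `m = r - 3` and `n - r = 2c + 1`. The witness `K_m + (c K_2 ∪ P_2 ∪ K_1)` has degree sum two
less than the bound, and `σ` as well as every graphic sum is even, so it suffices that no
realization `G` of its degree sequence contains `K_{r+1} - U`. In `G` the `m` vertices of degree
`n - 1` are universal, so every other vertex has at most two neighbours outside them, and only one
vertex (of degree `m + 2`) can have two. A copy of `K_{r+1} - U` has at least four vertices outside
the universal ones; `G` misses the edges of a `C_4` or of `K_4 - P_2` on them, and the missing edges
must come from `U`.
-/

section Patterns

variable {V : Type*}

lemma contains_C4graph_of (G : SimpleGraph V) {a b c d : V} (hac : a ≠ c) (hbd : b ≠ d)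
    (hab : G.Adj a b) (hbc : G.Adj b c) (hcd : G.Adj c d) (had : G.Adj a d) :
    Contains G C4graph := by
  have := G.ne_of_adj hab; have := G.ne_of_adj hbc; have := G.ne_of_adj hcd
  have := G.ne_of_adj had
  refine ⟨⟨![a, b, c, d], fun i j h => ?_⟩, fun u v huv => ?_⟩
  · fin_cases i <;> fin_cases j <;> simp_all [eq_comm]
  · change G.Adj (![a, b, c, d] u) (![a, b, c, d] v)
    fin_cases u <;> fin_cases v <;> simp_all [C4graph, G.adj_comm]

lemma contains_Z4graph_of (G : SimpleGraph V) {a b c d : V} (hab : a ≠ b) (hbc : b ≠ c)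
    (hac : G.Adj a c) (had : G.Adj a d) (hbd : G.Adj b d) (hcd : G.Adj c d) :
    Contains G Z4graph := by
  have := G.ne_of_adj hac; have := G.ne_of_adj had; have := G.ne_of_adj hbd
  have := G.ne_of_adj hcd
  refine ⟨⟨![a, b, c, d], fun i j h => ?_⟩, fun u v huv => ?_⟩
  · fin_cases i <;> fin_cases j <;> simp_all [eq_comm]
  · change G.Adj (![a, b, c, d] u) (![a, b, c, d] v)
    fin_cases u <;> fin_cases v <;> simp_all [Z4graph, G.adj_comm]

end Patterns

lemma Contains.of_map_s4 {α β γ : Type*} {U : SimpleGraph α} {f : α ↪ γ} {P : SimpleGraph β}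
    (h : Contains (U.map f) P) (hP : ∀ u, ∃ v, P.Adj u v) : Contains U P := by
  obtain ⟨g, hg⟩ := h
  have hrange : ∀ u, ∃ a, f a = g u := fun u => by
    obtain ⟨v, huv⟩ := hP u
    obtain ⟨a, -, -, ha, -⟩ := (map_adj f U _ _).1 (hg huv)
    exact ⟨a, ha⟩
  choose q hq using hrange
  refine ⟨⟨q, fun u v h => g.injective (by rw [← hq, ← hq, h])⟩, fun u v huv => ?_⟩
  change U.Adj (q u) (q v)
  simpa [← hq] using hg huv

lemma C4graph_exists_adj_s4 (u : Fin 4) : ∃ v, C4graph.Adj u v :=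
  ⟨u + 1, by fin_cases u <;> simp [C4graph]⟩

lemma Z4graph_exists_adj_s4 (u : Fin 4) : ∃ v, Z4graph.Adj u v :=
  ⟨if u = 3 then 0 else 3, by fin_cases u <;> simp [Z4graph]⟩

section Sparse

variable {α : Type*} [DecidableEq α] (K : SimpleGraph α) [DecidableRel K.Adj] {X : Finset α}

lemma contains_compl_Z4graph (hX : 4 ≤ #X) {s : α} (hsX : s ∈ X)
    (hs : #{y ∈ X | K.Adj s y} = 2)
    (hle_one : ∀ x ∈ X, x ≠ s → #{y ∈ X | K.Adj x y} ≤ 1) :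
    Contains Kᶜ Z4graph := by
  obtain ⟨y, z, hyz, hN⟩ := card_eq_two.mp hs
  have hnbr : ∀ x, x ∈ X ∧ K.Adj s x ↔ x = y ∨ x = z := fun x => by
    simpa using congrArg (x ∈ ·) hN
  obtain ⟨hyX, hsy⟩ := (hnbr y).2 (Or.inl rfl)
  obtain ⟨hzX, hsz⟩ := (hnbr z).2 (Or.inr rfl)
  have honly : ∀ x ∈ X, K.Adj s x → ∀ w ∈ X, K.Adj x w → w = s :=
    fun x hx hsx w hw hxw => card_le_one.mp (hle_one x hx (K.ne_of_adj hsx).symm) w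
      (by simp [hw, hxw]) s (by simp [hsX, hsx.symm])
  obtain ⟨w, hwX, hw⟩ := exists_mem_notMem_of_card_lt_card
    (card_le_three.trans_lt hX : #({s, y, z} : Finset α) < #X)
  simp only [mem_insert, mem_singleton, not_or] at hw
  obtain ⟨hws, hwy, hwz⟩ := hw
  exact contains_Z4graph_of Kᶜ (K.ne_of_adj hsy).symm (K.ne_of_adj hsz)
    ((compl_adj _ _ _).2 ⟨hyz, fun h => (K.ne_of_adj hsz).symm (honly y hyX hsy z hzX h)⟩)
    ((compl_adj _ _ _).2 ⟨Ne.symm hwy, fun h => hws (honly y hyX hsy w hwX h)⟩)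
    ((compl_adj _ _ _).2 ⟨Ne.symm hws, fun h => by
      rcases (hnbr w).1 ⟨hwX, h⟩ with h | h <;> contradiction⟩)
    ((compl_adj _ _ _).2 ⟨Ne.symm hwz, fun h => hws (honly z hzX hsz w hwX h)⟩)

lemma contains_compl_C4graph (hX : 4 ≤ #X) (hle_one : ∀ x ∈ X, #{y ∈ X | K.Adj x y} ≤ 1) :
    Contains Kᶜ C4graph := by
  -- an edge of `K[X]` if there is one, any pair otherwise
  obtain ⟨a, ha, b, hb, hab, hclosed⟩ : ∃ a ∈ X, ∃ b ∈ X, a ≠ b ∧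
      ∀ x ∈ X, K.Adj a x ∨ K.Adj b x → x = a ∨ x = b := by
    by_cases he : ∃ a ∈ X, ∃ b ∈ X, K.Adj a b
    · obtain ⟨a, ha, b, hb, hab⟩ := he
      refine ⟨a, ha, b, hb, K.ne_of_adj hab, fun x hx hx' => ?_⟩
      rcases hx' with h | h
      · exact .inr (card_le_one.mp (hle_one a ha) x (by simp [hx, h]) b (by simp [hb, hab]))
      · exact .inl
          (card_le_one.mp (hle_one b hb) x (by simp [hx, h]) a (by simp [ha, hab.symm]))
    · push Not at he
      obtain ⟨a, ha, b, hb, hab⟩ := one_lt_card.mp (by omega : 1 < #X)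
      exact ⟨a, ha, b, hb, hab, fun x hx h => (h.elim (he a ha x hx) (he b hb x hx)).elim⟩
  have hrest : 1 < #(X \ {a, b}) :=
    lt_of_lt_of_le (by have := card_le_two (a := a) (b := b); omega) (le_card_sdiff _ _)
  obtain ⟨c, hc, d, hd, hcd⟩ := one_lt_card.mp hrest
  have hfar : ∀ x ∈ X \ {a, b}, Kᶜ.Adj a x ∧ Kᶜ.Adj b x := fun x hx => by
    simp only [mem_sdiff, mem_insert, mem_singleton, not_or] at hx
    obtain ⟨hxX, hxa, hxb⟩ := hx
    have := hclosed x hxX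
    simp only [compl_adj]
    tauto
  exact contains_C4graph_of Kᶜ hab hcd (hfar c hc).1 ((hfar c hc).2.symm) (hfar d hd).2
    (hfar d hd).1

theorem contains_compl_C4graph_or_Z4graph (hX : 4 ≤ #X)
    (hle_two : ∀ x ∈ X, #{y ∈ X | K.Adj x y} ≤ 2)
    (hunique : ∀ x ∈ X, ∀ x' ∈ X,
      #{y ∈ X | K.Adj x y} = 2 → #{y ∈ X | K.Adj x' y} = 2 → x = x') :
    Contains Kᶜ C4graph ∨ Contains Kᶜ Z4graph := by
  by_cases hs : ∃ s ∈ X, #{y ∈ X | K.Adj s y} = 2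
  · obtain ⟨s, hsX, hs⟩ := hs
    refine .inr (contains_compl_Z4graph K hX hsX hs fun x hx hxs => ?_)
    have := hle_two x hx
    have := mt (hunique x hx s hsX · hs) hxs
    omega
  · push Not at hs
    refine .inl (contains_compl_C4graph K hX fun x hx => ?_)
    have := hle_two x hx
    have := hs x hx
    omega

end Sparse

theorem not_contains_top_sdiff_map {V α β : Type*} [Fintype V] [DecidableEq V] [Fintype β]
    (G : SimpleGraph V) [DecidableRel G.Adj] (B : Finset V) (hB : #B + 4 ≤ Fintype.card β)
    (hle_two : ∀ v ∉ B, #{w ∈ Bᶜ | G.Adj v w} ≤ 2)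
    (hunique : ∀ v ∉ B, ∀ v' ∉ B,
      #{w ∈ Bᶜ | G.Adj v w} = 2 → #{w ∈ Bᶜ | G.Adj v' w} = 2 → v = v')
    {U : SimpleGraph α} (f : α ↪ β) (hC4 : ¬ Contains U C4graph)
    (hZ4 : ¬ Contains U Z4graph) : ¬ Contains G (⊤ \ U.map f) := by
  classical
  rintro ⟨φ, hφ⟩
  set H : SimpleGraph β := ⊤ \ U.map f
  set T : Finset β := {a | φ a ∉ B}
  have hT : 4 ≤ #T := by
    have : #Tᶜ ≤ #B :=
      card_le_card_of_injOn φ (fun a ha => by simpa [T] using ha) φ.injective.injOn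
    have := card_add_card_compl T
    omega
  have hnbr : ∀ a ∈ T, #{b ∈ T | H.Adj a b} ≤ #{w ∈ Bᶜ | G.Adj (φ a) w} := fun a _ =>
    card_le_card_of_injOn φ (fun b hb => by simp_all [T]) φ.injective.injOn
  have hTB : ∀ a ∈ T, φ a ∉ B := fun a ha => by simpa [T] using ha
  have key := contains_compl_C4graph_or_Z4graph H hT
    (fun a ha => (hnbr a ha).trans (hle_two _ (hTB a ha)))
    (fun a ha a' ha' e e' => φ.injective <| hunique _ (hTB a ha) _ (hTB a' ha')
      (le_antisymm (hle_two _ (hTB a ha)) (e ▸ hnbr a ha))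
      (le_antisymm (hle_two _ (hTB a' ha')) (e' ▸ hnbr a' ha')))
  rw [show Hᶜ = U.map f by simp [H]] at key
  rcases key with h | h
  exacts [hC4 (h.of_map_s4 C4graph_exists_adj_s4), hZ4 (h.of_map_s4 Z4graph_exists_adj_s4)]

lemma deg_eq_degree {n : ℕ} (G : SimpleGraph (Fin n)) [DecidableRel G.Adj] (v : Fin n) :
    deg G v = G.degree v := by
  rw [deg, ← card_neighborFinset_eq_degree, ← Set.ncard_coe_finset]
  congr
  ext
  simp

lemma IsGraphic.even_sum {n : ℕ} {d : Fin n → ℕ} (h : IsGraphic d) : Even (∑ i, d i) := by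
  classical
  obtain ⟨G, hG⟩ := h
  simp_rw [← hG, deg_eq_degree, sum_degrees_eq_twice_card_edges]
  exact even_two_mul _

lemma IsGraphic.sum_le {n : ℕ} {d : Fin n → ℕ} (h : IsGraphic d) : ∑ i, d i ≤ n * n := by
  classical
  obtain ⟨G, hG⟩ := h
  calc ∑ i, d i ≤ ∑ _i : Fin n, n := sum_le_sum fun i _ => by
          simpa [← hG, deg_eq_degree] using (G.degree_lt_card_verts i).le
    _ = n * n := by simp

theorem add_two_le_sigmaPot {β : Type*} (H : SimpleGraph β) {n : ℕ} {d : Fin n → ℕ}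
    (hd : Antitone d) (hg : IsGraphic d) (hH : ¬ PotentiallyGraphic H d) :
    ∑ i, d i + 2 ≤ sigmaPot H n := by
  have hne : {l : ℕ | Even l ∧ ∀ d : Fin n → ℕ, Antitone d → IsGraphic d →
      l ≤ ∑ i, d i → PotentiallyGraphic H d}.Nonempty :=
    ⟨2 * (n * n + 1), even_two_mul _, fun d _ hd hl => absurd hl (by have := hd.sum_le; omega)⟩
  obtain ⟨⟨a, ha⟩, hpot⟩ := Nat.sInf_mem hne
  have hlt : ∑ i, d i < sigmaPot H n := lt_of_not_ge fun hle => hH (hpot d hd hg hle)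
  obtain ⟨b, hb⟩ := hg.even_sum
  rw [sigmaPot, ha] at *
  omega

lemma deg_eq_card {n : ℕ} {G : SimpleGraph (Fin n)} {v : Fin n} (T : Finset (Fin n))
    (h : ∀ w, G.Adj v w ↔ w ∈ T) : deg G v = #T := by
  rw [deg, ← Set.ncard_coe_finset]
  congr
  ext
  simp [h]

lemma card_filter_val_lt_of_le {n k : ℕ} (hk : k ≤ n) : #{w : Fin n | w.val < k} = k := by
  simpa [hk] using Fin.card_filter_val_lt (n := n) (m := k)

lemma card_filter_compl_adj_of_isUniversal {V : Type*} [Fintype V] [DecidableEq V]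
    (G : SimpleGraph V) [DecidableRel G.Adj] {B : Finset V} (hB : ∀ b ∈ B, G.IsUniversal b)
    {v : V} (hv : v ∉ B) :
    #{w ∈ Bᶜ | G.Adj v w} = G.degree v - #B := by
  have hin : (G.neighborFinset v).filter (· ∈ B) = B := by
    ext w
    simp only [mem_filter, mem_neighborFinset, and_iff_right_iff_imp]
    exact fun hw => (hB w hw (ne_of_mem_of_not_mem hw hv)).symm
  have hout : (G.neighborFinset v).filter (· ∉ B) = {w ∈ Bᶜ | G.Adj v w} := by
    ext w
    simp [and_comm]
  have := card_filter_add_card_filter_not (s := G.neighborFinset v) (· ∈ B)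
  rw [hin, hout] at this
  rw [← card_neighborFinset_eq_degree]
  omega

section Extremal

variable (m c : ℕ)

def extremalSeq (i : Fin (m + 2 * c + 4)) : ℕ :=
  if i.val < m then m + 2 * c + 3 else if i.val = m then m + 2
  else if i.val < m + 2 * c + 3 then m + 1 else m

/-- `K_m + (c K_2 ∪ P_2 ∪ K_1)`: the vertices `< m` span the `K_m`, vertex `m` is the centre of
the `P_2` with ends `m + 1` and `m + 2`, the pairs `m + 3 + 2t, m + 4 + 2t` (`t < c`) are the
`K_2`'s, and the last vertex is the `K_1`. -/
def extremalGraph : SimpleGraph (Fin (m + 2 * c + 4)) :=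
  SimpleGraph.fromRel fun i j => i.val < m ∨ (i.val = m ∧ (j.val = m + 1 ∨ j.val = m + 2)) ∨
    (m + 3 ≤ i.val ∧ (i.val + m) % 2 = 1 ∧ j.val = i.val + 1 ∧ j.val < m + 2 * c + 3)

lemma deg_extremalGraph (v : Fin (m + 2 * c + 4)) :
    deg (extremalGraph m c) v = extremalSeq m c v := by
  have hv := v.isLt
  simp only [extremalSeq]
  split_ifs
  · rw [deg_eq_card (univ.erase v) fun w => by
      simp [extremalGraph, Fin.ext_iff]; omega]
    simp
  · rw [deg_eq_card (({w | w.val < m + 3} : Finset (Fin _)).erase v) fun w => by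
      simp [extremalGraph, Fin.ext_iff]; omega]
    rw [card_erase_of_mem (by simp; omega), card_filter_val_lt_of_le (by omega)]
    omega
  · by_cases hend : v.val ≤ m + 2
    · rw [deg_eq_card ({w | w.val < m + 1} : Finset (Fin _)) fun w => by
        simp [extremalGraph, Fin.ext_iff]; omega]
      exact card_filter_val_lt_of_le (by omega)
    · let p : Fin (m + 2 * c + 4) :=
        ⟨if (v.val + m) % 2 = 1 then v.val + 1 else v.val - 1, by split_ifs <;> omega⟩
      rw [deg_eq_card (insert p ({w | w.val < m} : Finset (Fin _))) fun w => by
        simp [extremalGraph, p, Fin.ext_iff]; split_ifs <;> omega]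
      rw [card_insert_of_notMem (by simp [p]; split_ifs <;> omega),
        card_filter_val_lt_of_le (by omega)]
  · rw [deg_eq_card ({w | w.val < m} : Finset (Fin _)) fun w => by
      simp [extremalGraph, Fin.ext_iff]; omega]
    exact card_filter_val_lt_of_le (by omega)

lemma extremalSeq_antitone : Antitone (extremalSeq m c) := by
  intro i j hij
  have : i.val ≤ j.val := hij
  simp only [extremalSeq]
  split_ifs <;> omega

lemma sum_extremalSeq :
    ∑ i, extremalSeq m c i = m * (m + 2 * c + 3) + (m + 2) + (2 * c + 2) * (m + 1) + m := by
  simp only [extremalSeq]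
  rw [Fin.sum_univ_eq_sum_range (fun i => if i < m then m + 2 * c + 3 else if i = m then m + 2
    else if i < m + 2 * c + 3 then m + 1 else m), show m + 2 * c + 4 = m + 1 + (2 * c + 2) + 1
    by ring, sum_range_succ, sum_range_add, sum_range_succ,
    sum_const_nat fun i hi => if_pos (mem_range.1 hi),
    sum_const_nat fun i hi => by
      simp only [mem_range] at hi
      rw [if_neg (by omega), if_neg (by omega), if_pos (by omega)],
    card_range, card_range]
  split_ifs <;> omega

lemma not_potentiallyGraphic_extremalSeq {α β : Type*} [Fintype β] {U : SimpleGraph α}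
    (f : α ↪ β) (hβ : m + 4 ≤ Fintype.card β) (hC4 : ¬ Contains U C4graph)
    (hZ4 : ¬ Contains U Z4graph) : ¬ PotentiallyGraphic (⊤ \ U.map f) (extremalSeq m c) := by
  classical
  rintro ⟨G, hG, hcont⟩
  set B : Finset (Fin (m + 2 * c + 4)) := {w | w.val < m}
  have hB : #B = m := card_filter_val_lt_of_le (by omega)
  have hdeg : ∀ v, G.degree v = extremalSeq m c v := fun v => by rw [← deg_eq_degree, hG]
  have huniv : ∀ b ∈ B, G.IsUniversal b := fun b hb => by
    rw [← degree_eq_card_sub_one, hdeg, Fintype.card_fin]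
    simp_all [B, extremalSeq]
  have hout : ∀ v ∉ B, #{w ∈ Bᶜ | G.Adj v w} = extremalSeq m c v - m := fun v hv => by
    rw [card_filter_compl_adj_of_isUniversal G huniv hv, hdeg, hB]
  refine not_contains_top_sdiff_map G B (by omega) (fun v hv => ?_) (fun v hv v' hv' h h' => ?_)
    f hC4 hZ4 hcont
  · have : m ≤ v.val := by simpa [B] using hv
    rw [hout v hv]
    simp only [extremalSeq]
    split_ifs <;> omega
  · have : m ≤ v.val ∧ m ≤ v'.val := by simp_all [B]
    rw [hout v hv] at h
    rw [hout v' hv'] at h'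
    simp only [extremalSeq] at h h'
    ext
    split_ifs at h h' <;> omega

end Extremal

theorem stmt_4_general (r n k : ℕ) (hr : 4 ≤ r) (hpar : Odd (n - r))
    (U : SimpleGraph (Fin k))
    (hC4 : ¬ Contains U C4graph) (hZ4 : ¬ Contains U Z4graph)
    (f : Fin k ↪ Fin (r + 1)) :
    (r - 1) * (2 * n - r) - 3 * (n - r) - 1 ≤
      sigmaPot ((⊤ : SimpleGraph (Fin (r + 1))) \ U.map f) n := by
  obtain ⟨m, rfl⟩ : ∃ m, r = m + 3 := ⟨r - 3, by omega⟩
  obtain ⟨c, rfl⟩ : ∃ c, n = m + 2 * c + 4 := by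
    obtain ⟨c, hc⟩ := hpar
    exact ⟨c, by omega⟩
  calc (m + 3 - 1) * (2 * (m + 2 * c + 4) - (m + 3)) - 3 * (m + 2 * c + 4 - (m + 3)) - 1
      = ∑ i, extremalSeq m c i + 2 := by
        rw [sum_extremalSeq, show m + 3 - 1 = m + 2 by omega,
          show 2 * (m + 2 * c + 4) - (m + 3) = m + 4 * c + 5 by omega,
          show m + 2 * c + 4 - (m + 3) = 2 * c + 1 by omega]
        have : (m + 2) * (m + 4 * c + 5) = m * (m + 2 * c + 3) + (m + 2) + (2 * c + 2) * (m + 1)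
          + m + 2 + 1 + 3 * (2 * c + 1) := by ring
        omega
    _ ≤ _ := add_two_le_sigmaPot _ (extremalSeq_antitone m c) ⟨_, deg_extremalGraph m c⟩
        (not_potentiallyGraphic_extremalSeq m c f (by simp) hC4 hZ4)

/-- Lower bound for `σ(K_{r+1} - U, n)` when `n - r` is odd. -/
theorem stmt_4 (r n k : ℕ) (hr : 4 ≤ r) (hn : r + 1 ≤ n) (hpar : Odd (n - r))
    (hk7 : 7 ≤ k) (hkr : k ≤ r + 1) (U : SimpleGraph (Fin k))
    (hC4 : ¬ Contains U C4graph) (hZ4 : ¬ Contains U Z4graph)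
    (f : Fin k ↪ Fin (r + 1)) :
    (r - 1) * (2 * n - r) - 3 * (n - r) - 1 ≤
      sigmaPot ((⊤ : SimpleGraph (Fin (r + 1))) \ U.map f) n :=
  stmt_4_general r n k hr hpar U hC4 hZ4 f
end

section
/- Let π = (d_1, ..., d_n) be a nonincreasing graphic sequence with n ≥ 5r + 18 and sum σ(π) ≥ (r-1)(2n-r) - 3(n-r) - 1. If d_{2r+2} ≤ r - 2 and there exists an index i with 1 ≤ i ≤ r-3 and d_i ≤ 2r - i - 1, then one obtains the contradiction σ(π) ≤ (r-1)(2n-r) - 3(n-r) - n + 5r + 16 < σ(π). Hence either d_{2r+2} ≥ r-1 or d_i ≥ 2r-i for all 1 ≤ i ≤ r-3. -/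
open SimpleGraph Finset

/- The three blocks of the degree estimate contribute at most `(i-1)(n-1)`,
`(2r-i+2)(2r-i-1)` and `(n-2r-1)(r-2)`; as a function of `i` this is a convex quadratic, so
over `1 ≤ i ≤ r-3` it is largest at an endpoint, and both endpoint values are at most
`(r-1)(2n-r) - 3(n-r) - n + 5r + 16`, which is below the assumed lower bound once
`n ≥ 5r + 18`. -/

lemma deg_le_card_sub_one {n : ℕ} (G : SimpleGraph (Fin n)) (v : Fin n) : deg G v ≤ n - 1 := by
  have hsub : {w | G.Adj v w} ⊆ ({v}ᶜ : Set (Fin n)) := fun w hw h => G.irrefl (h ▸ hw)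
  calc deg G v ≤ ({v}ᶜ : Set (Fin n)).ncard := Set.ncard_le_ncard hsub
    _ = n - 1 := by rw [Set.ncard_compl, Set.ncard_singleton, Nat.card_eq_fintype_card,
        Fintype.card_fin]

lemma sum_range_le_of_le_on_Ico {f : ℕ → ℕ} {a b n M x y : ℕ} (hab : a ≤ b) (hbn : b ≤ n)
    (hM : ∀ k < a, f k ≤ M) (hx : ∀ k, a ≤ k → k < b → f k ≤ x)
    (hy : ∀ k, b ≤ k → k < n → f k ≤ y) :
    ∑ k ∈ range n, f k ≤ a * M + (b - a) * x + (n - b) * y := by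
  rw [range_eq_Ico, ← sum_Ico_consecutive f (Nat.zero_le a) (hab.trans hbn),
    ← sum_Ico_consecutive f hab hbn, ← add_assoc]
  gcongr
  · simpa using sum_le_card_nsmul (Ico 0 a) f M fun k hk => hM k (mem_Ico.1 hk).2
  · simpa using sum_le_card_nsmul (Ico a b) f x fun k hk => hx k (mem_Ico.1 hk).1 (mem_Ico.1 hk).2
  · simpa using sum_le_card_nsmul (Ico b n) f y fun k hk => hy k (mem_Ico.1 hk).1 (mem_Ico.1 hk).2

lemma sum_le_of_antitone {n : ℕ} {d : Fin n → ℕ} (hd : Antitone d) {a b M x y : ℕ}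
    (hab : a ≤ b) (hbn : b < n) (hM : ∀ k, d k ≤ M) (hx : d ⟨a, hab.trans_lt hbn⟩ ≤ x)
    (hy : d ⟨b, hbn⟩ ≤ y) :
    ∑ k, d k ≤ a * M + (b - a) * x + (n - b) * y := by
  have hext : ∑ k, d k = ∑ k ∈ range n, if h : k < n then d ⟨k, h⟩ else 0 := by
    simp [← Fin.sum_univ_eq_sum_range]
  rw [hext]
  refine sum_range_le_of_le_on_Ico hab hbn.le (fun k hk => ?_) (fun k hak _ => ?_)
    (fun k hbk hk => ?_)
  · split_ifs <;> simp [hM]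
  · split_ifs with h
    exacts [(hd (Fin.mk_le_mk.2 hak)).trans hx, Nat.zero_le x]
  · simpa [hk] using (hd (Fin.mk_le_mk.2 hbk)).trans hy

lemma degree_estimate_lt {r n i : ℤ} (hn : 5 * r + 18 ≤ n) (hi : 1 ≤ i) (hir : i ≤ r - 3) :
    (i - 1) * (n - 1) + (2 * r + 2 - i) * (2 * r - i - 1) + (n - 2 * r - 1) * (r - 2)
      < (r - 1) * (2 * n - r) - 3 * (n - r) - 1 :=
  calc (i - 1) * (n - 1) + (2 * r + 2 - i) * (2 * r - i - 1) + (n - 2 * r - 1) * (r - 2)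
      ≤ (r - 1) * (2 * n - r) - 3 * (n - r) - n + 5 * r + 16 := by
        nlinarith [mul_nonneg (sub_nonneg.2 hir) (show 0 ≤ n + i - 3 * r - 5 by linarith)]
    _ < (r - 1) * (2 * n - r) - 3 * (n - r) - 1 := by linarith

/-- For `n ≥ 5r+18` and `σ(π) ≥ (r-1)(2n-r) - 3(n-r) - 1`, one cannot have both
`d_{2r+2} ≤ r-2` and some `1 ≤ i ≤ r-3` with `d_i ≤ 2r-i-1`; hence
either `d_{2r+2} ≥ r-1` or `d_i ≥ 2r-i` for all `1 ≤ i ≤ r-3` (1-based indices). -/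
theorem stmt_8 (r n : ℕ) (hn : 5 * r + 18 ≤ n) (d : Fin n → ℕ)
    (hA : Antitone d) (hG : IsGraphic d)
    (hσ : ((r : ℤ) - 1) * (2 * n - r) - 3 * ((n : ℤ) - r) - 1 ≤ ∑ i, (d i : ℤ)) :
    ((r : ℤ) - 1 ≤ (d ⟨2 * r + 1, by omega⟩ : ℤ)) ∨
      ∀ i : ℕ, 1 ≤ i → ∀ _hi : i ≤ r - 3,
        (2 * (r : ℤ) - i ≤ (d ⟨i - 1, by omega⟩ : ℤ)) := by
  by_contra! h
  obtain ⟨hlow, i, hi, hir, hdi⟩ := h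
  obtain ⟨G, hGd⟩ := hG
  have hsum := sum_le_of_antitone hA (a := i - 1) (b := 2 * r + 1) (M := n - 1)
    (x := 2 * r - i - 1) (y := r - 2) (by omega) (by omega)
    (fun k => hGd k ▸ deg_le_card_sub_one G k) (by omega) (by omega)
  have hsumℤ : ∑ k, (d k : ℤ) ≤ ((i : ℤ) - 1) * (n - 1) + (2 * r + 2 - i) * (2 * r - i - 1)
      + (n - 2 * r - 1) * (r - 2) := by
    have := (Nat.cast_le (α := ℤ)).2 hsum
    push_cast [Nat.cast_sub (show 1 ≤ i by omega), Nat.cast_sub (show 1 ≤ n by omega),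
      Nat.cast_sub (show i - 1 ≤ 2 * r + 1 by omega), Nat.cast_sub (show 2 * r + 1 ≤ n by omega),
      Nat.cast_sub (show 1 ≤ 2 * r - i by omega), Nat.cast_sub (show i ≤ 2 * r by omega),
      Nat.cast_sub (show 2 ≤ r by omega)] at this
    linarith
  exact absurd (hσ.trans hsumℤ) (not_le.2 (degree_estimate_lt (by exact_mod_cast hn)
    (by exact_mod_cast hi) (by omega)))
end

section
/- If a graphic sequence π = (d_1, ..., d_n) has a realization G containing a subgraph H on h vertices, then π has a realization G' containing H as a subgraph such that the vertices of H are the h vertices of largest degree in G'. -/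
open SimpleGraph Finset

/-!
Among all realizations of `d` together with an embedding of `H`, take one maximizing the total
degree of the image of `H`. Suppose a vertex `w` outside the image has larger degree than an
image vertex `u`. Letting a suitable set `S` of vertices (neighbours of `u` not adjacent to `w`,
plus equally many neighbours of `w` not adjacent to `u`) exchange their adjacencies to `u` and
`w` preserves every degree and makes `w` adjacent to all former neighbours of `u`. Composing
the embedding with the transposition of `u` and `w` then embeds `H` with strictly larger total
degree, a contradiction.
-/

namespace SimpleGraph

variable {V : Type*}

section swapNeighbors

variable [DecidableEq V] (G : SimpleGraph V) (u w : V) (S : Set V)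

open Classical in
/-- Every vertex of `S` trades its adjacency to `u` for its adjacency to `w` and vice versa. -/
def swapNeighbors : SimpleGraph V where
  Adj x y := if x ∈ S ∨ y ∈ S then G.Adj (Equiv.swap u w x) (Equiv.swap u w y) else G.Adj x y
  symm := ⟨fun x y => by
    simp only [or_comm (a := x ∈ S)]
    split_ifs <;> exact G.adj_symm⟩
  loopless := ⟨fun x => by split_ifs <;> exact G.loopless.irrefl _⟩

variable {G u w S}

lemma swapNeighbors_comm : G.swapNeighbors u w S = G.swapNeighbors w u S := by
  simp only [swapNeighbors, Equiv.swap_comm]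

lemma swapNeighbors_adj_of_mem {x : V} (hx : x ∈ S) (y : V) :
    (G.swapNeighbors u w S).Adj x y ↔ G.Adj (Equiv.swap u w x) (Equiv.swap u w y) := by
  simp [swapNeighbors, hx]

lemma swapNeighbors_adj_of_notMem {x y : V} (hx : x ∉ S) (hy : y ∉ S) :
    (G.swapNeighbors u w S).Adj x y ↔ G.Adj x y := by
  simp [swapNeighbors, hx, hy]

lemma swapNeighbors_adj_of_ne {x y : V} (hxu : x ≠ u) (hxw : x ≠ w) (hyu : y ≠ u) (hyw : y ≠ w) :
    (G.swapNeighbors u w S).Adj x y ↔ G.Adj x y := by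
  simp only [swapNeighbors, Equiv.swap_apply_of_ne_of_ne hxu hxw,
    Equiv.swap_apply_of_ne_of_ne hyu hyw, ite_self]

lemma swapNeighbors_adj_of_notMem_of_ne {x : V} (hx : x ∉ S) (hxu : x ≠ u) (hxw : x ≠ w)
    (hu : u ∉ S) (hw : w ∉ S) (y : V) : (G.swapNeighbors u w S).Adj x y ↔ G.Adj x y := by
  by_cases hyu : y = u
  · exact swapNeighbors_adj_of_notMem hx (hyu ▸ hu)
  by_cases hyw : y = w
  · exact swapNeighbors_adj_of_notMem hx (hyw ▸ hw)
  exact swapNeighbors_adj_of_ne hxu hxw hyu hyw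

lemma swap_apply_of_mem_of_notMem {x : V} (hx : x ∈ S) (hu : u ∉ S) (hw : w ∉ S) :
    Equiv.swap u w x = x :=
  Equiv.swap_apply_of_ne_of_ne (ne_of_mem_of_not_mem hx hu) (ne_of_mem_of_not_mem hx hw)

lemma neighborSet_swapNeighbors_of_mem {x : V} (hx : x ∈ S) (hu : u ∉ S) (hw : w ∉ S) :
    (G.swapNeighbors u w S).neighborSet x = Equiv.swap u w ⁻¹' G.neighborSet x := by
  ext y
  rw [mem_neighborSet, swapNeighbors_adj_of_mem hx, swap_apply_of_mem_of_notMem hx hu hw]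
  rfl

lemma neighborSet_swapNeighbors_left (hu : u ∉ S) (hw : w ∉ S) :
    (G.swapNeighbors u w S).neighborSet u = (G.neighborSet w ∩ S) ∪ (G.neighborSet u \ S) := by
  ext y
  by_cases hy : y ∈ S
  · rw [mem_neighborSet, adj_comm, swapNeighbors_adj_of_mem hy, Equiv.swap_apply_left,
      swap_apply_of_mem_of_notMem hy hu hw]
    simp [hy, adj_comm]
  · simp [swapNeighbors_adj_of_notMem hu hy, hy]

lemma swapNeighbors_adj_right_of_adj_left (hu : u ∉ S) (hw : w ∉ S)
    (hS : G.neighborSet u \ {w} ⊆ G.neighborSet w ∪ S) {y : V} (hy : y ≠ w) (h : G.Adj u y) :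
    (G.swapNeighbors u w S).Adj w y := by
  by_cases hyS : y ∈ S
  · rw [adj_comm, swapNeighbors_adj_of_mem hyS, swap_apply_of_mem_of_notMem hyS hu hw,
      Equiv.swap_apply_right]
    exact h.symm
  · rw [swapNeighbors_adj_of_notMem hw hyS]
    exact (hS ⟨h, hy⟩).resolve_right hyS

theorem swapNeighbors_adj_swap (hu : u ∉ S) (hw : w ∉ S)
    (hS : G.neighborSet u \ {w} ⊆ G.neighborSet w ∪ S) {x y : V} (hx : x ≠ w) (hy : y ≠ w)
    (h : G.Adj x y) : (G.swapNeighbors u w S).Adj (Equiv.swap u w x) (Equiv.swap u w y) := by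
  by_cases hxu : x = u
  · subst hxu
    rw [Equiv.swap_apply_left, Equiv.swap_apply_of_ne_of_ne h.ne' hy]
    exact swapNeighbors_adj_right_of_adj_left hu hw hS hy h
  by_cases hyu : y = u
  · subst hyu
    rw [Equiv.swap_apply_left, Equiv.swap_apply_of_ne_of_ne h.ne hx, adj_comm]
    exact swapNeighbors_adj_right_of_adj_left hu hw hS hx h.symm
  rw [Equiv.swap_apply_of_ne_of_ne hxu hx, Equiv.swap_apply_of_ne_of_ne hyu hy]
  exact (swapNeighbors_adj_of_ne hxu hx hyu hy).2 h

variable [Finite V]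

lemma ncard_neighborSet_swapNeighbors_left (hu : u ∉ S) (hw : w ∉ S)
    (hS : (G.neighborSet u ∩ S).ncard = (G.neighborSet w ∩ S).ncard) :
    ((G.swapNeighbors u w S).neighborSet u).ncard = (G.neighborSet u).ncard := by
  rw [neighborSet_swapNeighbors_left hu hw,
    Set.ncard_union_eq (Set.disjoint_sdiff_right.mono_left Set.inter_subset_right), ← hS,
    Set.ncard_inter_add_ncard_sdiff_eq_ncard]

theorem ncard_neighborSet_swapNeighbors (hu : u ∉ S) (hw : w ∉ S)
    (hS : (G.neighborSet u ∩ S).ncard = (G.neighborSet w ∩ S).ncard) (x : V) :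
    ((G.swapNeighbors u w S).neighborSet x).ncard = (G.neighborSet x).ncard := by
  by_cases hx : x ∈ S
  · rw [neighborSet_swapNeighbors_of_mem hx hu hw,
      Set.ncard_preimage_of_injective_subset_range (Equiv.injective _) (by simp)]
  by_cases hxu : x = u
  · rw [hxu]
    exact ncard_neighborSet_swapNeighbors_left hu hw hS
  by_cases hxw : x = w
  · rw [hxw, swapNeighbors_comm]
    exact ncard_neighborSet_swapNeighbors_left hw hu hS.symm
  congr 1
  ext y
  exact swapNeighbors_adj_of_notMem_of_ne hx hxu hxw hu hw y

end swapNeighbors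

theorem exists_swapNeighbors_set [Finite V] {G : SimpleGraph V} {u w : V}
    (hle : (G.neighborSet u).ncard ≤ (G.neighborSet w).ncard) :
    ∃ S : Set V, u ∉ S ∧ w ∉ S ∧ (G.neighborSet u ∩ S).ncard = (G.neighborSet w ∩ S).ncard ∧
      G.neighborSet u \ {w} ⊆ G.neighborSet w ∪ S := by
  have hle' : (G.neighborSet u \ {w}).ncard ≤ (G.neighborSet w \ {u}).ncard := by
    by_cases hadj : G.Adj u w
    · have h₁ := Set.ncard_sdiff_singleton_add_one (s := G.neighborSet u) hadj
      have h₂ := Set.ncard_sdiff_singleton_add_one (s := G.neighborSet w) hadj.symm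
      omega
    · rwa [Set.sdiff_singleton_eq_self (show w ∉ G.neighborSet u from hadj),
        Set.sdiff_singleton_eq_self (show u ∉ G.neighborSet w from hadj ∘ G.adj_symm)]
  rw [Set.ncard_le_ncard_iff_ncard_sdiff_le_ncard_sdiff] at hle'
  -- `S` consists of the neighbours of `u` that `w` lacks, together with equally many
  -- neighbours of `w` that `u` lacks.
  set N₁ := G.neighborSet u \ {w}
  set N₂ := G.neighborSet w \ {u}
  obtain ⟨P, hP, hPcard⟩ := Set.exists_subset_card_eq hle'
  have huu : ¬G.Adj u u := G.irrefl
  have hww : ¬G.Adj w w := G.irrefl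
  have hP' : ∀ x ∈ P, x ≠ u ∧ G.Adj w x ∧ ¬G.Adj u x := fun x hx => by
    have := hP hx
    simp only [N₁, N₂, Set.mem_sdiff, mem_neighborSet, Set.mem_singleton_iff] at this
    grind
  have hA : G.neighborSet u ∩ (N₁ \ N₂ ∪ P) = N₁ \ N₂ := by
    ext x
    simp only [N₁, N₂, Set.mem_inter_iff, Set.mem_union, Set.mem_sdiff, mem_neighborSet,
      Set.mem_singleton_iff]
    grind
  have hB : G.neighborSet w ∩ (N₁ \ N₂ ∪ P) = P := by
    ext x
    simp only [N₁, N₂, Set.mem_inter_iff, Set.mem_union, Set.mem_sdiff, mem_neighborSet,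
      Set.mem_singleton_iff]
    grind
  refine ⟨N₁ \ N₂ ∪ P, ?_, ?_, by rw [hA, hB, hPcard], ?_⟩ <;>
    simp only [N₁, N₂, Set.subset_def, Set.mem_union, Set.mem_sdiff, mem_neighborSet,
      Set.mem_singleton_iff] <;>
    grind

theorem exists_ncard_neighborSet_eq_and_adj_swap [DecidableEq V] [Finite V] {G : SimpleGraph V}
    {u w : V} (hle : (G.neighborSet u).ncard ≤ (G.neighborSet w).ncard) :
    ∃ G' : SimpleGraph V, (∀ x, (G'.neighborSet x).ncard = (G.neighborSet x).ncard) ∧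
      ∀ ⦃x y : V⦄, x ≠ w → y ≠ w → G.Adj x y →
        G'.Adj (Equiv.swap u w x) (Equiv.swap u w y) := by
  obtain ⟨S, hu, hw, hcard, hcover⟩ := exists_swapNeighbors_set hle
  exact ⟨G.swapNeighbors u w S, ncard_neighborSet_swapNeighbors hu hw hcard,
    fun _ _ => swapNeighbors_adj_swap hu hw hcover⟩

end SimpleGraph

theorem Function.Embedding.sum_swap_apply_add {α β M : Type*} [Fintype α] [DecidableEq β]
    [AddCommMonoid M] (g : β → M) (f : α ↪ β) (a : α) {w : β} (hw : w ∉ Set.range f) :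
    ∑ x, g (Equiv.swap (f a) w (f x)) + g (f a) = ∑ x, g (f x) + g w := by
  classical
  have hupdate : (fun x => g (Equiv.swap (f a) w (f x))) = Function.update (g ∘ f) a (g w) := by
    ext x
    by_cases hx : x = a
    · subst hx
      simp
    · rw [Function.update_of_ne hx, Function.comp_apply,
        Equiv.swap_apply_of_ne_of_ne (f.injective.ne hx) (fun h => hw ⟨x, h⟩)]
  rw [hupdate, Finset.sum_update_of_mem (Finset.mem_univ a),
    Finset.sum_eq_add_sum_sdiff_singleton_of_mem (Finset.mem_univ a) (fun x => g (f x))]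
  simp only [Function.comp_apply]
  abel

/-- Gould–Jacobson–Lehel: if some realization of `π` contains `H`, then there is a
realization containing `H` on the vertices of largest degree. -/
theorem stmt_10 (n h : ℕ) (d : Fin n → ℕ) (H : SimpleGraph (Fin h))
    (G : SimpleGraph (Fin n)) (hG : ∀ i, deg G i = d i) (hHG : Contains G H) :
    ∃ G' : SimpleGraph (Fin n), (∀ i, deg G' i = d i) ∧
      ∃ f : Fin h ↪ Fin n,
        (∀ ⦃u v : Fin h⦄, H.Adj u v → G'.Adj (f u) (f v)) ∧
        (∀ (v : Fin h) (w : Fin n), w ∉ Set.range f → deg G' w ≤ deg G' (f v)) := by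
  obtain ⟨f₀, hf₀⟩ := hHG
  let realizations : Set (SimpleGraph (Fin n) × (Fin h ↪ Fin n)) :=
    {p | (∀ i, deg p.1 i = d i) ∧ ∀ ⦃a b⦄, H.Adj a b → p.1.Adj (p.2 a) (p.2 b)}
  obtain ⟨⟨G', f⟩, ⟨hdeg, hf⟩, hmax⟩ := realizations.exists_max_image
    (fun p => ∑ a, d (p.2 a)) realizations.toFinite ⟨(G, f₀), hG, hf₀⟩
  refine ⟨G', hdeg, f, hf, fun v w hw => ?_⟩
  by_contra! hlt
  obtain ⟨G'', hdeg'', hadj''⟩ := exists_ncard_neighborSet_eq_and_adj_swap hlt.le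
  have hw' : ∀ a, f a ≠ w := fun a h => hw ⟨a, h⟩
  have hle := hmax (G'', f.trans (Equiv.swap (f v) w).toEmbedding)
    ⟨fun i => (hdeg'' i).trans (hdeg i), fun a b hab => hadj'' (hw' a) (hw' b) (hf hab)⟩
  have hsum := f.sum_swap_apply_add d v hw
  rw [hdeg, hdeg] at hlt
  simp only [Function.Embedding.trans_apply, Equiv.coe_toEmbedding] at hle
  omega
end

section
/- Let π = (d_1, ..., d_n) be a nonincreasing graphic sequence and let G be a realization of π on vertices v_1, ..., v_n with deg(v_i) = d_i. If the subgraph of G induced by {v_1, ..., v_{r+1}} has at most C(r+1,2) - 1 edges, then there exists a realization H of π with deg_H(v_i) = d_i for i = 1, ..., r+1 such that v_r and v_{r+1} are not adjacent in H. -/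
/-!
Degrees are preserved by a 2-switch, which replaces edges `pq`, `xy` by the non-edges `px`,
`qy`. If `c ~ t`, `a ≁ t` and `deg c ≤ deg a`, then `a` has a neighbour `w ≠ c` that is not
a neighbour of `c`, and the switch `ct, wa ↦ cw, ta` removes the edge `ct`. Since the first
`r + 1` vertices do not span a clique, there is a non-edge `ab` with `a < b ≤ v_{r+1}`; unless
it is `v_r v_{r+1}` itself, `a` precedes `v_r`, so `deg a ≥ deg v_r` and `deg b ≥ deg v_{r+1}`,
and at most two such switches (the first using `b` to free `a` from `v_{r+1}`) make
`v_r v_{r+1}` a non-edge.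
-/

open SimpleGraph Finset

namespace SimpleGraph

variable {V : Type*}

def SameDegrees (G H : SimpleGraph V) : Prop :=
  ∀ v, (H.neighborSet v).ncard = (G.neighborSet v).ncard

lemma SameDegrees.refl (G : SimpleGraph V) : SameDegrees G G := fun _ => rfl

lemma SameDegrees.trans {G H K : SimpleGraph V} (hGH : SameDegrees G H)
    (hHK : SameDegrees H K) :
    SameDegrees G K := fun v => (hHK v).trans (hGH v)

def twoSwitch (G : SimpleGraph V) (p q x y : V) : SimpleGraph V :=
  G.deleteEdges {s(p, q), s(x, y)} ⊔ edge p x ⊔ edge q y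

variable (G : SimpleGraph V) {p q x y : V}

lemma twoSwitch_comm : G.twoSwitch q p y x = G.twoSwitch p q x y := by
  ext u w
  simp only [twoSwitch, sup_adj, deleteEdges_adj, edge_adj, Set.mem_insert_iff,
    Set.mem_singleton_iff, Sym2.eq_swap]
  tauto

lemma twoSwitch_swap : G.twoSwitch x y p q = G.twoSwitch p q x y := by
  ext u w
  simp only [twoSwitch, sup_adj, deleteEdges_adj, edge_adj, Set.mem_insert_iff,
    Set.mem_singleton_iff]
  tauto

lemma neighborSet_twoSwitch_left (hpq : p ≠ q) (hpx : p ≠ x) (hpy : p ≠ y) :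
    (G.twoSwitch p q x y).neighborSet p = insert x (G.neighborSet p \ {q}) := by
  ext w
  simp only [twoSwitch, mem_neighborSet, sup_adj, deleteEdges_adj, edge_adj,
    Set.mem_insert_iff, Set.mem_sdiff, Set.mem_singleton_iff, Sym2.eq_iff]
  grind

lemma neighborSet_twoSwitch_of_ne {v : V} (hp : v ≠ p) (hq : v ≠ q) (hx : v ≠ x)
    (hy : v ≠ y) :
    (G.twoSwitch p q x y).neighborSet v = G.neighborSet v := by
  ext w
  simp only [twoSwitch, mem_neighborSet, sup_adj, deleteEdges_adj, edge_adj,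
    Set.mem_insert_iff, Set.mem_singleton_iff, Sym2.eq_iff]
  grind

section Finite

variable [Finite V]

lemma ncard_neighborSet_twoSwitch_left (hpq : G.Adj p q) (hpx : ¬G.Adj p x) (hpx' : p ≠ x)
    (hpy : p ≠ y) :
    ((G.twoSwitch p q x y).neighborSet p).ncard = (G.neighborSet p).ncard := by
  rw [neighborSet_twoSwitch_left G hpq.ne hpx' hpy, Set.ncard_insert_of_notMem (fun h => hpx h.1),
    Set.ncard_sdiff_singleton_add_one (show q ∈ G.neighborSet p from hpq)]

lemma sameDegrees_twoSwitch (hpq : G.Adj p q) (hxy : G.Adj x y) (hpx : ¬G.Adj p x)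
    (hqy : ¬G.Adj q y) (hpx' : p ≠ x) (hqy' : q ≠ y) (hpy : p ≠ y) (hqx : q ≠ x) :
    SameDegrees G (G.twoSwitch p q x y) := by
  intro v
  by_cases hvp : v = p
  · subst hvp
    exact G.ncard_neighborSet_twoSwitch_left hpq hpx hpx' hpy
  by_cases hvq : v = q
  · subst hvq
    rw [← twoSwitch_comm]
    exact G.ncard_neighborSet_twoSwitch_left hpq.symm hqy hqy' hqx
  by_cases hvx : v = x
  · subst hvx
    rw [← twoSwitch_swap]
    exact G.ncard_neighborSet_twoSwitch_left hxy (fun h => hpx h.symm) hpx'.symm hqx.symm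
  by_cases hvy : v = y
  · subst hvy
    rw [← twoSwitch_swap, ← twoSwitch_comm]
    exact G.ncard_neighborSet_twoSwitch_left hxy.symm (fun h => hqy h.symm) hqy'.symm hpy.symm
  rw [G.neighborSet_twoSwitch_of_ne hvp hvq hvx hvy]

lemma exists_adj_not_adj_of_ncard_le {a c t : V} (hct : G.Adj c t) (hat : ¬G.Adj a t)
    (hat' : a ≠ t) (hdeg : (G.neighborSet c).ncard ≤ (G.neighborSet a).ncard) :
    ∃ w, G.Adj a w ∧ ¬G.Adj c w ∧ w ≠ c := by
  by_contra! h
  have hsub : G.neighborSet a \ {c} ⊂ G.neighborSet c \ {a} := by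
    refine (Set.ssubset_iff_of_subset ?_).2 ⟨t, ⟨hct, ?_⟩, fun ht => hat ht.1⟩
    · rintro w ⟨haw, hwc⟩
      exact ⟨by_contra fun hcw => hwc (h w haw hcw), haw.ne'⟩
    · exact hat'.symm
  have hlt := Set.ncard_lt_ncard hsub
  by_cases hac : G.Adj a c
  · rw [Set.ncard_sdiff_singleton_of_mem (show c ∈ G.neighborSet a from hac),
      Set.ncard_sdiff_singleton_of_mem (show a ∈ G.neighborSet c from hac.symm)] at hlt
    omega
  · rw [Set.sdiff_singleton_eq_self (show c ∉ G.neighborSet a from hac),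
      Set.sdiff_singleton_eq_self (show a ∉ G.neighborSet c from fun h => hac h.symm)] at hlt
    omega

lemma exists_sameDegrees_not_adj_of_ncard_le {a c t : V} (hat : ¬G.Adj a t) (hac : a ≠ c)
    (hat' : a ≠ t) (hdeg : (G.neighborSet c).ncard ≤ (G.neighborSet a).ncard) :
    ∃ H, SameDegrees G H ∧ ¬H.Adj c t := by
  by_cases hct : G.Adj c t
  swap
  · exact ⟨G, SameDegrees.refl G, hct⟩
  obtain ⟨w, haw, hcw, hwc⟩ := G.exists_adj_not_adj_of_ncard_le hct hat hat' hdeg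
  have hwt : w ≠ t := by rintro rfl; exact hat haw
  refine ⟨G.twoSwitch c t w a, G.sameDegrees_twoSwitch hct haw.symm hcw (fun h => hat h.symm)
    hwc.symm hat'.symm hac.symm hwt.symm, ?_⟩
  simp only [twoSwitch, sup_adj, deleteEdges_adj, edge_adj, Set.mem_insert_iff,
    Set.mem_singleton_iff, Sym2.eq_iff]
  grind

lemma exists_sameDegrees_not_adj {a b u v : V} (hab : ¬G.Adj a b) (hne : a ≠ b) (hau : a ≠ u)
    (hav : a ≠ v) (hdu : (G.neighborSet u).ncard ≤ (G.neighborSet a).ncard)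
    (hdv : (G.neighborSet v).ncard ≤ (G.neighborSet b).ncard) :
    ∃ H, SameDegrees G H ∧ ¬H.Adj u v := by
  by_cases hav' : G.Adj a v
  · have hbv : b ≠ v := by rintro rfl; exact hab hav'
    obtain ⟨H₁, hGH₁, hva⟩ :=
      G.exists_sameDegrees_not_adj_of_ncard_le (fun h => hab h.symm) hbv hne.symm hdv
    obtain ⟨H₂, hH₁H₂, huv⟩ :=
      H₁.exists_sameDegrees_not_adj_of_ncard_le (fun h => hva h.symm) hau hav
        (by rw [hGH₁, hGH₁]; exact hdu)
    exact ⟨H₂, hGH₁.trans hH₁H₂, huv⟩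
  · exact G.exists_sameDegrees_not_adj_of_ncard_le hav' hau hav hdu

end Finite

lemma choose_two_le_ncard_edges_of_isClique [DecidableEq V] {s : Finset V}
    (hs : G.IsClique (s : Set V)) :
    (#s).choose 2 ≤ {e ∈ G.edgeSet | ∀ v ∈ e, v ∈ s}.ncard := by
  rw [← Sym2.card_image_offDiag, ← Set.ncard_coe_finset]
  refine Set.ncard_le_ncard ?_ (s.sym2.finite_toSet.subset fun e he => mem_sym2_iff.2 he.2)
  intro e he
  simp only [coe_image, Set.mem_image, mem_coe, mem_offDiag, Prod.exists,
    Function.uncurry_apply_pair] at he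
  obtain ⟨a, b, ⟨ha, hb, hab⟩, rfl⟩ := he
  refine ⟨hs ha hb hab, ?_⟩
  simp [ha, hb]

lemma exists_lt_not_adj_of_ncard_edges_lt [LinearOrder V] {s : Finset V}
    (h : {e ∈ G.edgeSet | ∀ v ∈ e, v ∈ s}.ncard < (#s).choose 2) :
    ∃ a ∈ s, ∃ b ∈ s, a < b ∧ ¬G.Adj a b := by
  by_contra! hs
  refine h.not_ge (G.choose_two_le_ncard_edges_of_isClique fun a ha b hb hab => ?_)
  rcases hab.lt_or_gt with hab | hab
  · exact hs a ha b hb hab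
  · exact (hs b hb a ha hab).symm

end SimpleGraph

/-- If the subgraph of a realization `G` induced by the first `r+1` vertices has at most
`C(r+1,2) - 1` edges, then there is a realization `H` of `π` with the same degrees on the
first `r+1` vertices in which `v_r` and `v_{r+1}` are nonadjacent. -/
theorem stmt_11 (r n : ℕ) (hr : 1 ≤ r) (hn : r + 1 ≤ n) (d : Fin n → ℕ)
    (hA : Antitone d) (G : SimpleGraph (Fin n)) (hG : ∀ i, deg G i = d i)
    (hEdges : Set.ncard {e ∈ G.edgeSet | ∀ v ∈ e, v.val < r + 1} ≤ (r + 1) * r / 2 - 1) :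
    ∃ H : SimpleGraph (Fin n),
      Finset.univ.val.map (deg H) = Finset.univ.val.map d ∧
      (∀ i : Fin n, i.val < r + 1 → deg H i = d i) ∧
      ¬ H.Adj ⟨r - 1, by omega⟩ ⟨r, by omega⟩ := by
  set u : Fin n := ⟨r - 1, by omega⟩
  set v : Fin n := ⟨r, by omega⟩
  have hcard : #(Iic v) = r + 1 := Fin.card_Iic v
  have hmem : ∀ w : Fin n, w ∈ Iic v ↔ w.val < r + 1 := fun w => by simp [v, Fin.le_def]
  obtain ⟨a, -, b, hb, hab, hnadj⟩ := G.exists_lt_not_adj_of_ncard_edges_lt (s := Iic v) (by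
    simp only [hmem, hcard, Nat.choose_two_right, Nat.add_sub_cancel]
    have : 2 ≤ (r + 1) * r := by nlinarith
    omega)
  have hdeg : ∀ i j : Fin n, i ≤ j → (G.neighborSet j).ncard ≤ (G.neighborSet i).ncard :=
    fun i j hij => ((hG j).trans_le (hA hij)).trans_eq (hG i).symm
  rw [hmem] at hb
  rw [Fin.lt_def] at hab
  obtain ⟨H, hH, huv⟩ : ∃ H, SameDegrees G H ∧ ¬H.Adj u v := by
    by_cases hau : a.val = r - 1
    · obtain ⟨rfl, rfl⟩ : a = u ∧ b = v :=
        ⟨Fin.ext hau, Fin.ext (by simp only [v]; omega)⟩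
      exact ⟨G, SameDegrees.refl G, hnadj⟩
    · refine G.exists_sameDegrees_not_adj hnadj (Fin.ne_of_val_ne hab.ne)
        (Fin.ne_of_val_ne hau) (Fin.ne_of_val_ne (by simp only [v]; omega))
        (hdeg a u ?_) (hdeg b v ?_) <;>
      simp only [Fin.le_def, u, v] <;> omega
  have hHd : ∀ i, deg H i = d i := fun i => (hH i).trans (hG i)
  exact ⟨H, by rw [show deg H = d from funext hHd], fun i _ => hHd i, huv⟩
end
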